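/- Let M = U(k,n) be the uniform matroid of rank k on n elements with k ≥ n − 3. Then the collection 𝒜 of dependent sets of the combinatorial derived matroid δM equals 𝒜₀; that is, 𝒜₀ is already closed under the operations ↑ and ε, so δM = (𝒞, 𝒜₀). -/

import Mathlib

open Set

namespace DM

variable {α : Type*}

/-- A circuit of a matroid: an inclusion-minimal dependent set. -/
def IsCircuit (M : Matroid α) (C : Set α) : Prop :=
  M.Dep C ∧ ∀ D, M.Dep D → D ⊆ C → D = C

/-- The collection 𝒞 of circuits of `M`. -/
def circuits (M : Matroid α) : Set (Set α) := {C | IsCircuit M C}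

/-- The rank of a set: the maximal cardinality of an independent subset. -/
noncomputable def rk (M : Matroid α) (S : Set α) : ℕ :=
  sSup {m : ℕ | ∃ I, I ⊆ S ∧ M.Indep I ∧ I.ncard = m}

/-- The nullity function n(S) = |S| - r(S). -/
noncomputable def nullity (M : Matroid α) (S : Set α) : ℕ := S.ncard - rk M S

/-- The support of a family of sets. -/
def supp (A : Set (Set α)) : Set α := ⋃₀ A

/-- The initial collection 𝒜₀ = {A ⊆ 𝒞 : |A| > n(supp A)}. -/
noncomputable def A0 (M : Matroid α) : Set (Set (Set α)) :=
  {A | A ⊆ circuits M ∧ nullity M (supp A) < A.ncard}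

/-- The operation ε. -/
def eps (X : Set (Set (Set α))) : Set (Set (Set α)) :=
  X ∪ {B | ∃ A₁ ∈ X, ∃ A₂ ∈ X, A₁ ∩ A₂ ∉ X ∧ ∃ C ∈ A₁ ∩ A₂, B = (A₁ ∪ A₂) \ {C}}

/-- The up-closure ↑X = {A ⊆ 𝒞 : ∃ A' ∈ X, A' ⊆ A} within the ground collection 𝒞. -/
def up (𝒞 : Set (Set α)) (X : Set (Set (Set α))) : Set (Set (Set α)) :=
  {A | A ⊆ 𝒞 ∧ ∃ A' ∈ X, A' ⊆ A}

/-- The increasing sequence 𝒜ᵢ with 𝒜₍ᵢ₊₁₎ = ↑ε(𝒜ᵢ). -/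
noncomputable def Ai (M : Matroid α) : ℕ → Set (Set (Set α))
  | 0 => A0 M
  | (i+1) => up (circuits M) (eps (Ai M i))

/-- 𝒜 = ⋃ᵢ 𝒜ᵢ : the collection of dependent sets of the combinatorial derived matroid δM. -/
noncomputable def derivedDep (M : Matroid α) : Set (Set (Set α)) := ⋃ i, Ai M i


/-! In `U(k,n)` with `n ≤ k + 3` every support has nullity at most `3`, whereas a nonempty family
of circuits has support of nullity at least `1`, and at least `2` once it holds two circuits. Hence
`𝒜₀` consists of the families of at least four circuits together with the triples spanning only
`k + 2` elements. Closure then follows by counting: a proper superset of a member of `𝒜₀` has at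
least four circuits, and `ε` produces a triple only from two triples sharing two circuits, which
forces all of them into the same `k + 2` elements. -/

lemma derivedDep_eq_A0_of_up_eps (M : Matroid α) (h : up (circuits M) (eps (A0 M)) = A0 M) :
    derivedDep M = A0 M := by
  have hAi : ∀ i, Ai M i = A0 M := by
    intro i
    induction i with
    | zero => rfl
    | succ i ih => rw [Ai, ih, h]
  simp only [derivedDep, hAi, iUnion_const]

section Uniform

variable {M : Matroid α} {k : ℕ}

lemma isCircuit_iff_of_uniform (hunif : ∀ I : Set α, M.Indep I ↔ I ⊆ M.E ∧ I.ncard ≤ k)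
    {C : Set α} : IsCircuit M C ↔ C ⊆ M.E ∧ C.ncard = k + 1 := by
  have dep_iff : ∀ D, M.Dep D ↔ D ⊆ M.E ∧ k < D.ncard := fun D => by
    rw [Matroid.dep_iff, hunif]
    constructor
    · rintro ⟨hni, hDE⟩
      exact ⟨hDE, by by_contra h; exact hni ⟨hDE, by omega⟩⟩
    · rintro ⟨hDE, hk⟩
      exact ⟨fun h => by omega, hDE⟩
  simp only [IsCircuit, dep_iff]
  constructor
  · rintro ⟨⟨hCE, hkC⟩, hmin⟩
    obtain ⟨D, hDC, hD⟩ := exists_subset_card_eq (s := C) (n := k + 1) hkC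
    rw [← hmin D ⟨hDC.trans hCE, by omega⟩ hDC]
    exact ⟨hDC.trans hCE, hD⟩
  · rintro ⟨hCE, hC⟩
    have hCfin : C.Finite := finite_of_ncard_pos (by omega)
    exact ⟨⟨hCE, by omega⟩, fun D ⟨_, hkD⟩ hDC => eq_of_subset_of_ncard_le hDC (by omega) hCfin⟩

lemma rk_eq_min_of_uniform (hunif : ∀ I : Set α, M.Indep I ↔ I ⊆ M.E ∧ I.ncard ≤ k)
    {S : Set α} (hSE : S ⊆ M.E) (hS : S.Finite) : rk M S = min S.ncard k := by
  have hranks : {m : ℕ | ∃ I, I ⊆ S ∧ M.Indep I ∧ I.ncard = m} = Iic (min S.ncard k) := by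
    ext m
    simp only [mem_ofPred_eq, mem_Iic, le_min_iff, hunif]
    constructor
    · rintro ⟨I, hIS, ⟨_, hIk⟩, rfl⟩
      exact ⟨ncard_le_ncard hIS hS, hIk⟩
    · rintro ⟨hmS, hmk⟩
      obtain ⟨I, hIS, hI⟩ := exists_subset_card_eq hmS
      exact ⟨I, hIS, ⟨hIS.trans hSE, hI ▸ hmk⟩, hI⟩
  rw [rk, hranks, csSup_Iic]

lemma supp_subset_ground {A : Set (Set α)} (hA : A ⊆ circuits M) : supp A ⊆ M.E :=
  sUnion_subset fun _ hC => (hA hC).1.subset_ground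

lemma finite_of_subset_circuits (hE : M.E.Finite) {A : Set (Set α)} (hA : A ⊆ circuits M) :
    A.Finite :=
  hE.finite_subsets.subset fun _ hC => (hA hC).1.subset_ground

lemma mem_A0_iff_of_uniform (hE : M.E.Finite)
    (hunif : ∀ I : Set α, M.Indep I ↔ I ⊆ M.E ∧ I.ncard ≤ k) {A : Set (Set α)}
    (hA : A ⊆ circuits M) : A ∈ A0 M ↔ (supp A).ncard - k < A.ncard := by
  have hsupp := supp_subset_ground hA
  rw [A0, mem_ofPred_eq, nullity, rk_eq_min_of_uniform hunif hsupp (hE.subset hsupp)]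
  exact ⟨fun h => by omega, fun h => ⟨hA, by omega⟩⟩

lemma add_one_le_ncard_supp (hE : M.E.Finite)
    (hunif : ∀ I : Set α, M.Indep I ↔ I ⊆ M.E ∧ I.ncard ≤ k) {A : Set (Set α)}
    (hA : A ⊆ circuits M) (hne : A.Nonempty) : k + 1 ≤ (supp A).ncard := by
  obtain ⟨C, hC⟩ := hne
  rw [← ((isCircuit_iff_of_uniform hunif).1 (hA hC)).2]
  exact ncard_le_ncard (subset_sUnion_of_mem hC) (hE.subset (supp_subset_ground hA))

lemma add_two_le_ncard_supp (hE : M.E.Finite)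
    (hunif : ∀ I : Set α, M.Indep I ↔ I ⊆ M.E ∧ I.ncard ≤ k) {A : Set (Set α)}
    (hA : A ⊆ circuits M) (hA2 : 1 < A.ncard) : k + 2 ≤ (supp A).ncard := by
  obtain ⟨C₁, hC₁, C₂, hC₂, hne⟩ := (one_lt_ncard (finite_of_subset_circuits hE hA)).1 hA2
  have hsupp : (supp A).Finite := hE.subset (supp_subset_ground hA)
  by_contra! h
  have eq_supp : ∀ C ∈ A, C = supp A := fun C hC =>
    eq_of_subset_of_ncard_le (subset_sUnion_of_mem hC)
      (by rw [((isCircuit_iff_of_uniform hunif).1 (hA hC)).2]; omega) hsupp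
  exact hne ((eq_supp C₁ hC₁).trans (eq_supp C₂ hC₂).symm)

lemma three_le_ncard_of_mem_A0 (hE : M.E.Finite)
    (hunif : ∀ I : Set α, M.Indep I ↔ I ⊆ M.E ∧ I.ncard ≤ k) {A : Set (Set α)}
    (hA : A ∈ A0 M) : 3 ≤ A.ncard := by
  have hlt := (mem_A0_iff_of_uniform hE hunif hA.1).1 hA
  have hne : A.Nonempty := nonempty_of_ncard_ne_zero (by omega)
  have h1 := add_one_le_ncard_supp hE hunif hA.1 hne
  have h2 := add_two_le_ncard_supp hE hunif hA.1 (by omega)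
  omega

lemma mem_A0_of_ncard_ground_sub_lt (hE : M.E.Finite)
    (hunif : ∀ I : Set α, M.Indep I ↔ I ⊆ M.E ∧ I.ncard ≤ k) {A : Set (Set α)}
    (hA : A ⊆ circuits M) (hlt : M.E.ncard - k < A.ncard) : A ∈ A0 M := by
  have := ncard_le_ncard (supp_subset_ground hA) hE
  exact (mem_A0_iff_of_uniform hE hunif hA).2 (by omega)

/-- A triple in `𝒜₀` spans only `k + 2` elements, and any two circuits already span that many. -/
lemma supp_eq_of_subset_of_mem_A0 (hE : M.E.Finite)
    (hunif : ∀ I : Set α, M.Indep I ↔ I ⊆ M.E ∧ I.ncard ≤ k) {A A' : Set (Set α)}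
    (hA : A ∈ A0 M) (hA3 : A.ncard = 3) (hA'A : A' ⊆ A) (hA'2 : 1 < A'.ncard) :
    supp A' = supp A := by
  have hle := (mem_A0_iff_of_uniform hE hunif hA.1).1 hA
  have hge := add_two_le_ncard_supp hE hunif (hA'A.trans hA.1) hA'2
  exact eq_of_subset_of_ncard_le (sUnion_mono hA'A) (by omega)
    (hE.subset (supp_subset_ground hA.1))

/-- A proper superset of a member of `𝒜₀` has at least four circuits, more than any nullity. -/
lemma up_A0_eq_of_uniform (hE : M.E.Finite)
    (hunif : ∀ I : Set α, M.Indep I ↔ I ⊆ M.E ∧ I.ncard ≤ k) (hn : M.E.ncard ≤ k + 3) :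
    up (circuits M) (A0 M) = A0 M := by
  refine Subset.antisymm ?_ fun A hA => ⟨hA.1, A, hA, subset_rfl⟩
  rintro A ⟨hA, A', hA', hA'A⟩
  obtain rfl | hssub := hA'A.eq_or_ssubset
  · exact hA'
  have := ncard_lt_ncard hssub (finite_of_subset_circuits hE hA)
  have := three_le_ncard_of_mem_A0 hE hunif hA'
  exact mem_A0_of_ncard_ground_sub_lt hE hunif hA (by omega)

lemma eps_A0_eq_of_uniform (hE : M.E.Finite)
    (hunif : ∀ I : Set α, M.Indep I ↔ I ⊆ M.E ∧ I.ncard ≤ k) (hn : M.E.ncard ≤ k + 3) :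
    eps (A0 M) = A0 M := by
  refine Subset.antisymm ?_ subset_union_left
  rintro B (hB | ⟨A₁, hA₁, A₂, hA₂, hI, C, hC, rfl⟩)
  · exact hB
  have hBc : (A₁ ∪ A₂) \ {C} ⊆ circuits M := sdiff_subset.trans (union_subset hA₁.1 hA₂.1)
  have hfin₁ := finite_of_subset_circuits hE hA₁.1
  have hfin₂ := finite_of_subset_circuits hE hA₂.1
  have hcard : ((A₁ ∪ A₂) \ {C}).ncard + 1 = (A₁ ∪ A₂).ncard :=
    ncard_sdiff_singleton_add_one (Or.inl hC.1) (hfin₁.union hfin₂)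
  have h₁ : A₁.ncard < (A₁ ∪ A₂).ncard := ncard_lt_ncard
    (ssubset_union_left_iff.2 fun h => hI (by rwa [inter_eq_right.2 h])) (hfin₁.union hfin₂)
  have h₂ : A₂.ncard < (A₁ ∪ A₂).ncard := ncard_lt_ncard
    (ssubset_union_right_iff.2 fun h => hI (by rwa [inter_eq_left.2 h])) (hfin₁.union hfin₂)
  have h₁₃ := three_le_ncard_of_mem_A0 hE hunif hA₁
  have h₂₃ := three_le_ncard_of_mem_A0 hE hunif hA₂
  by_cases hlarge : 4 < (A₁ ∪ A₂).ncard
  · exact mem_A0_of_ncard_ground_sub_lt hE hunif hBc (by omega)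
  -- Otherwise `A₁` and `A₂` are triples sharing two circuits, so they span the same `k + 2` elements.
  have hI₂ : 1 < (A₁ ∩ A₂).ncard := by
    have := ncard_union_add_ncard_inter A₁ A₂ hfin₁ hfin₂
    omega
  have hsupp₁ := supp_eq_of_subset_of_mem_A0 hE hunif hA₁ (by omega) inter_subset_left hI₂
  have hsupp₂ := supp_eq_of_subset_of_mem_A0 hE hunif hA₂ (by omega) inter_subset_right hI₂
  have hsuppB : supp ((A₁ ∪ A₂) \ {C}) ⊆ supp A₁ := by
    refine (sUnion_mono sdiff_subset).trans ?_
    rw [sUnion_union]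
    exact union_subset subset_rfl (hsupp₂.symm.trans hsupp₁).subset
  have hA₁supp := (mem_A0_iff_of_uniform hE hunif hA₁.1).1 hA₁
  have := ncard_le_ncard hsuppB (hE.subset (supp_subset_ground hA₁.1))
  exact (mem_A0_iff_of_uniform hE hunif hBc).2 (by omega)

end Uniform

theorem uniform_derivedDep_eq_A0_general (M : Matroid α) (k n : ℕ)
    (hge : n - 3 ≤ k)
    (hE : M.E.Finite) (hcardE : M.E.ncard = n)
    (hunif : ∀ I : Set α, M.Indep I ↔ I ⊆ M.E ∧ I.ncard ≤ k) :
    derivedDep M = A0 M := by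
  have hn : M.E.ncard ≤ k + 3 := by omega
  apply derivedDep_eq_A0_of_up_eps
  rw [eps_A0_eq_of_uniform hE hunif hn, up_A0_eq_of_uniform hE hunif hn]

/-- for the uniform matroid U(k,n) with k ≥ n − 3, the dependent sets of
δM are exactly 𝒜₀, i.e. δM = (𝒞, 𝒜₀). -/
theorem uniform_derivedDep_eq_A0 (M : Matroid α) (k n : ℕ) (hk : 0 < k) (hkn : k < n)
    (hge : n - 3 ≤ k)
    (hE : M.E.Finite) (hcardE : M.E.ncard = n)
    (hunif : ∀ I : Set α, M.Indep I ↔ I ⊆ M.E ∧ I.ncard ≤ k) :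
    derivedDep M = A0 M :=
  uniform_derivedDep_eq_A0_general M k n hge hE hcardE hunif

end DM
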